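/- (POD reconstruction preserves linear constraints) Let c ∈ ℝ^N, X ∈ ℝ^{N×M} with c^T X = β 1_M^T for some constant β ∈ ℝ, X̃ = X H the column-centered data, and U_d ∈ ℝ^{N×d} with columns in the column space of X̃. Then the reconstruction X̂ = U_d U_d^T X̃ + X(I_M - H) satisfies c^T X̂ = β 1_M^T. -/

import Mathlib

/-!
Write `cᵀX = β 1ᵀ`. Every column of the centering matrix `H` sums to zero, so `cᵀ X̃ = β 1ᵀ H = 0`:
`c` annihilates the column space of `X̃`, hence the columns of `U_d`, hence the whole projected
term `U_d U_dᵀ X̃`. What is left is `cᵀ X (I - H) = β 1ᵀ (I - H) = β 1ᵀ`.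
-/

open Matrix Submodule Set

section

variable {m n : Type*} [Fintype m] [Fintype n]

theorem dotProduct_eq_zero_of_mem_span_col {R : Type*} [CommRing R] {A : Matrix m n R}
    {c : m → R} (hc : c ᵥ* A = 0) {v : m → R} (hv : v ∈ span R (range A.col)) :
    c ⬝ᵥ v = 0 := by
  rw [← range_mulVecLin] at hv
  obtain ⟨w, rfl⟩ := hv
  rw [mulVecLin_apply, dotProduct_mulVec, hc, zero_dotProduct]

variable (n) (K : Type*) [Field K] [DecidableEq n]

def centeringMatrix : Matrix n n K := 1 - (Fintype.card n : K)⁻¹ • of fun _ _ => 1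

variable {n K} [CharZero K] [Nonempty n]

theorem const_vecMul_centeringMatrix (β : K) :
    (fun _ => β) ᵥ* centeringMatrix n K = 0 := by
  have hcard : (Fintype.card n : K) ≠ 0 := Nat.cast_ne_zero.mpr Fintype.card_ne_zero
  rw [centeringMatrix, vecMul_sub, vecMul_one, vecMul_smul]
  ext j
  simp [vecMul, dotProduct, hcard]

theorem const_vecMul_one_sub_centeringMatrix (β : K) :
    (fun _ => β) ᵥ* (1 - centeringMatrix n K) = fun _ => β := by
  rw [vecMul_sub, vecMul_one, const_vecMul_centeringMatrix, sub_zero]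

end

theorem pod_reconstruction_preserves_linear_constraint_general (N M d : ℕ)
    (c : Fin N → ℝ) (β : ℝ)
    (X : Matrix (Fin N) (Fin M) ℝ)
    (hX : ∀ j : Fin M, ∑ i, c i * X i j = β)
    (H : Matrix (Fin M) (Fin M) ℝ)
    (hH : H = 1 - (M : ℝ)⁻¹ • (Matrix.of fun _ _ : Fin M => (1 : ℝ)))
    (Xc : Matrix (Fin N) (Fin M) ℝ) (hXc : Xc = X * H)
    (Ud : Matrix (Fin N) (Fin d) ℝ)
    (hUd : ∀ j : Fin d, (fun i => Ud i j) ∈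
      Submodule.span ℝ (Set.range fun k : Fin M => fun i => Xc i k))
    (Xhat : Matrix (Fin N) (Fin M) ℝ)
    (hXhat : Xhat = Ud * Udᵀ * Xc + X * (1 - H)) :
    ∀ j : Fin M, ∑ i, c i * Xhat i j = β := by
  intro j
  have : Nonempty (Fin M) := ⟨j⟩
  have hcX : c ᵥ* X = fun _ => β := funext hX
  have hH' : H = centeringMatrix (Fin M) ℝ := by rw [hH, centeringMatrix, Fintype.card_fin]
  have hcXc : c ᵥ* Xc = 0 := by
    rw [hXc, ← vecMul_vecMul, hcX, hH', const_vecMul_centeringMatrix]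
  have hcUd : c ᵥ* Ud = 0 := funext fun k => dotProduct_eq_zero_of_mem_span_col hcXc (hUd k)
  have hcXhat : c ᵥ* Xhat = fun _ => β := by
    rw [hXhat, vecMul_add, Matrix.mul_assoc, ← vecMul_vecMul, hcUd, zero_vecMul, zero_add,
      ← vecMul_vecMul, hcX, hH', const_vecMul_one_sub_centeringMatrix]
  exact congrFun hcXhat j

/-- POD reconstruction preserves linear constraints: if
`cᵀ X = β 1ᵀ`, then the POD reconstruction
`X̂ = U_d U_dᵀ X̃ + X (I - H)` also satisfies `cᵀ X̂ = β 1ᵀ`. -/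
theorem pod_reconstruction_preserves_linear_constraint (N M d : ℕ) (hM : 0 < M)
    (c : Fin N → ℝ) (β : ℝ)
    (X : Matrix (Fin N) (Fin M) ℝ)
    (hX : ∀ j : Fin M, ∑ i, c i * X i j = β)
    (H : Matrix (Fin M) (Fin M) ℝ)
    (hH : H = 1 - (M : ℝ)⁻¹ • (Matrix.of fun _ _ : Fin M => (1 : ℝ)))
    (Xc : Matrix (Fin N) (Fin M) ℝ) (hXc : Xc = X * H)
    (Ud : Matrix (Fin N) (Fin d) ℝ)
    (hUd : ∀ j : Fin d, (fun i => Ud i j) ∈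
      Submodule.span ℝ (Set.range fun k : Fin M => fun i => Xc i k))
    (Xhat : Matrix (Fin N) (Fin M) ℝ)
    (hXhat : Xhat = Ud * Udᵀ * Xc + X * (1 - H)) :
    ∀ j : Fin M, ∑ i, c i * Xhat i j = β :=
  pod_reconstruction_preserves_linear_constraint_general N M d c β X hX H hH Xc hXc Ud hUd Xhat
    hXhat
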